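/- arXiv:2403.09366 — 2 statements merged into one kernel-verified Lean document; each statement's English description precedes it below -/
import Mathlib

section
/- Let 2 ≤ p < N. With F₁ as above, there exists l ∈ (1,2) such that 1 < l ≤ F₁'(s)s/F₁(s) ≤ p for all s ≠ 0. In particular F₁'(s)s/F₁(s) > p - 1 for all s > 0 and lim_{s→+∞} F₁'(s)s/F₁(s) = p. -/
/-!
Write `a = (p - 1) δ`. On `(0, a)` one has `F₁ s = -s^p log s`, whose elasticity `s F₁'(s) / F₁(s)`
is `p + 1 / log s`, which lies in `[p - 1/2, p)` as soon as `log a ≤ -4`. On `[a, ∞)`,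
`F₁ s = C s^p + b s^(p-1) - K` with `C = -(log a + 1 + 1/p) ≥ 2`, `b = p δ`, `K = a^p / (p (p-1))`.
There `p F₁ - s F₁' = b s^(p-1) - p K ≥ 0` and `s F₁' - (p - 1) F₁ = C s^p + (p - 1) K`, which give
`p - 1/2 ≤ s F₁' / F₁ ≤ p` and `p - s F₁' / F₁ ≤ b / (C s) → 0`. The two branches agree to first
order at `a`, and evenness carries the bounds over to `s < 0`, so `l = 3/2` works.
-/

open Real Filter Set Topology

noncomputable def elasticity (f : ℝ → ℝ) (s : ℝ) : ℝ := deriv f s * s / f s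

section Elasticity

variable {f g : ℝ → ℝ} {s d : ℝ}

lemma HasDerivAt.elasticity_eq (hf : HasDerivAt f d s) : elasticity f s = d * s / f s := by
  rw [elasticity, hf.deriv]

lemma elasticity_congr_of_hasDerivAt (hf : HasDerivAt f d s) (hg : HasDerivAt g d s)
    (hfg : f s = g s) : elasticity f s = elasticity g s := by
  rw [hf.elasticity_eq, hg.elasticity_eq, hfg]

lemma Filter.EventuallyEq.elasticity_eq (h : f =ᶠ[𝓝 s] g) : elasticity f s = elasticity g s := by
  rw [elasticity, elasticity, h.deriv_eq, h.eq_of_nhds]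

lemma elasticity_of_even (hf : ∀ t ≤ 0, f t = f (-t)) (hs : s < 0) :
    elasticity f s = elasticity f (-s) := by
  have hfs : f =ᶠ[𝓝 s] fun t ↦ f (-t) :=
    eventually_of_mem (Iio_mem_nhds hs) fun t ht ↦ hf t (le_of_lt ht)
  rw [elasticity, elasticity, hfs.deriv_eq, deriv_comp_neg, hf s hs.le]
  ring

end Elasticity

lemma HasDerivAt.of_eventuallyEq_nhdsLE_nhdsGE {f g h : ℝ → ℝ} {a d : ℝ}
    (hg : HasDerivAt g d a) (hh : HasDerivAt h d a) (hfg : f =ᶠ[𝓝[≤] a] g)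
    (hfh : f =ᶠ[𝓝[≥] a] h) : HasDerivAt f d a := by
  have hle := hg.hasDerivWithinAt.congr_of_eventuallyEq hfg (hfg.self_of_nhdsWithin self_mem_Iic)
  have hge := hh.hasDerivWithinAt.congr_of_eventuallyEq hfh (hfh.self_of_nhdsWithin self_mem_Ici)
  simpa only [Iic_union_Ici, hasDerivWithinAt_univ] using hle.union hge

lemma rpow_eq_mul_rpow_sub_one {s p : ℝ} (hs : 0 < s) : s ^ p = s * s ^ (p - 1) := by
  rw [rpow_sub_one hs.ne', mul_div_cancel₀ _ hs.ne']

section Branches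

noncomputable def innerBranch (p t : ℝ) : ℝ := -(t ^ p) * log t

noncomputable def outerBranch (p C b K t : ℝ) : ℝ := C * t ^ p + b * t ^ (p - 1) - K

variable {p C b K s : ℝ}

lemma hasDerivAt_innerBranch (hs : 0 < s) :
    HasDerivAt (innerBranch p) (-(p * log s + 1) * s ^ (p - 1)) s := by
  refine (((hasDerivAt_rpow_const (p := p) (Or.inl hs.ne')).neg).mul
    (hasDerivAt_log hs.ne')).congr_deriv ?_
  rw [rpow_sub_one hs.ne', Pi.neg_apply]
  field_simp
  ring

lemma elasticity_innerBranch (hs : 0 < s) (hlog : log s ≠ 0) :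
    elasticity (innerBranch p) s = p + (log s)⁻¹ := by
  rw [(hasDerivAt_innerBranch hs).elasticity_eq, innerBranch, rpow_sub_one hs.ne']
  field_simp

lemma hasDerivAt_outerBranch (hs : s ≠ 0) :
    HasDerivAt (outerBranch p C b K)
      (C * (p * s ^ (p - 1)) + b * ((p - 1) * s ^ (p - 1 - 1))) s :=
  (((hasDerivAt_rpow_const (Or.inl hs)).const_mul C).add
    ((hasDerivAt_rpow_const (Or.inl hs)).const_mul b)).sub_const K

lemma elasticity_outerBranch (hs : 0 < s) :
    elasticity (outerBranch p C b K) s =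
      (p * C * s ^ p + (p - 1) * b * s ^ (p - 1)) / outerBranch p C b K s := by
  rw [(hasDerivAt_outerBranch hs.ne').elasticity_eq, rpow_sub_one hs.ne' (p - 1),
    rpow_sub_one hs.ne' p]
  field_simp

lemma mul_rpow_le_outerBranch (hp : 1 ≤ p) (hK : 0 ≤ K) (hKs : p * K ≤ b * s ^ (p - 1)) :
    C * s ^ p ≤ outerBranch p C b K s := by
  rw [outerBranch]
  nlinarith

lemma elasticity_outerBranch_le (hs : 0 < s) (hp : 1 ≤ p) (hC : 0 < C) (hK : 0 ≤ K)
    (hKs : p * K ≤ b * s ^ (p - 1)) : elasticity (outerBranch p C b K) s ≤ p := by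
  have hpos := (mul_pos hC (rpow_pos_of_pos hs p)).trans_le (mul_rpow_le_outerBranch hp hK hKs)
  rw [elasticity_outerBranch hs, div_le_iff₀ hpos, outerBranch]
  linarith

lemma sub_le_elasticity_outerBranch (hs : 0 < s) (hp : 1 ≤ p) (hC : 0 < C) (hK : 0 ≤ K)
    (hKs : p * K ≤ b * s ^ (p - 1)) :
    p - b / (C * s) ≤ elasticity (outerBranch p C b K) s := by
  have hCs := mul_pos hC (rpow_pos_of_pos hs p)
  have hD := mul_rpow_le_outerBranch (C := C) hp hK hKs
  have hb : 0 ≤ b * s ^ (p - 1) := (mul_nonneg (by linarith) hK).trans hKs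
  have hgap : p * outerBranch p C b K s - (p * C * s ^ p + (p - 1) * b * s ^ (p - 1)) ≤
      b * s ^ (p - 1) := by
    rw [outerBranch]; nlinarith
  have hpos := hCs.trans_le hD
  rw [elasticity_outerBranch hs, sub_le_comm]
  calc p - _ = (p * outerBranch p C b K s - (p * C * s ^ p + (p - 1) * b * s ^ (p - 1))) /
        outerBranch p C b K s := by field_simp
    _ ≤ b * s ^ (p - 1) / outerBranch p C b K s := by gcongr
    _ ≤ b * s ^ (p - 1) / (C * s ^ p) := by gcongr
    _ = b / (C * s) := by
      rw [rpow_eq_mul_rpow_sub_one (p := p) hs, ← mul_assoc,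
        mul_div_mul_right _ _ (rpow_pos_of_pos hs (p - 1)).ne']

lemma sub_half_le_elasticity_outerBranch (hs : 0 < s) (hp : 1 ≤ p) (hC : 0 < C) (hK : 0 ≤ K)
    (hKs : p * K ≤ b * s ^ (p - 1)) (hbC : b ≤ C * s) :
    p - 1 / 2 ≤ elasticity (outerBranch p C b K) s := by
  have hpos := (mul_pos hC (rpow_pos_of_pos hs p)).trans_le (mul_rpow_le_outerBranch hp hK hKs)
  have hX := rpow_pos_of_pos hs (p - 1)
  rw [elasticity_outerBranch hs, le_div_iff₀ hpos, outerBranch, rpow_eq_mul_rpow_sub_one hs]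
  nlinarith

end Branches

section F₁

variable {p δ s : ℝ}

noncomputable def f₁Tail (p δ : ℝ) : ℝ → ℝ :=
  outerBranch p (-(log ((p - 1) * δ) + 1 + 1 / p)) (p * δ) (((p - 1) * δ) ^ p / (p * (p - 1)))

lemma innerBranch_eq (hp : p ≠ 0) (hs : 0 < s) :
    innerBranch p s = -(1 / p) * s ^ p * log (s ^ p) := by
  rw [innerBranch, log_rpow hs]
  field_simp

lemma f₁Tail_eq (hp : 1 < p) (hδ : 0 < δ) :
    f₁Tail p δ s = -(1 / p) * s ^ p * (log (((p - 1) * δ) ^ p) + p + 1) + p * δ * s ^ (p - 1)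
      - (1 / (p * (p - 1))) * ((p - 1) * δ) ^ p := by
  rw [f₁Tail, outerBranch, log_rpow (by nlinarith)]
  field_simp

lemma f₁Tail_threshold_eq_innerBranch (hp : 1 < p) (hδ : 0 < δ) :
    f₁Tail p δ ((p - 1) * δ) = innerBranch p ((p - 1) * δ) := by
  have ha : 0 < (p - 1) * δ := by nlinarith
  have hp1 : p - 1 ≠ 0 := by linarith
  rw [f₁Tail, outerBranch, innerBranch, rpow_eq_mul_rpow_sub_one (p := p) ha]
  field_simp
  ring

lemma hasDerivAt_f₁Tail_threshold (hp : 1 < p) (hδ : 0 < δ) :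
    HasDerivAt (f₁Tail p δ) (-(p * log ((p - 1) * δ) + 1) * ((p - 1) * δ) ^ (p - 1))
      ((p - 1) * δ) := by
  have ha : 0 < (p - 1) * δ := by nlinarith
  refine (hasDerivAt_outerBranch ha.ne').congr_deriv ?_
  rw [rpow_eq_mul_rpow_sub_one (p := p - 1) ha]
  field_simp
  ring

lemma elasticity_f₁Tail_bounds (hp : 2 ≤ p) (hδ : 0 < δ) (hlog : log ((p - 1) * δ) ≤ -4)
    (hs : (p - 1) * δ ≤ s) :
    p - 1 / 2 ≤ elasticity (f₁Tail p δ) s ∧ p - p * δ / s ≤ elasticity (f₁Tail p δ) s ∧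
      elasticity (f₁Tail p δ) s ≤ p := by
  have ha : 0 < (p - 1) * δ := by nlinarith
  have hp1 : p - 1 ≠ 0 := by linarith
  have hs0 : 0 < s := ha.trans_le hs
  have hC : 2 ≤ -(log ((p - 1) * δ) + 1 + 1 / p) := by
    have : 1 / p ≤ 1 := by rw [div_le_one (by linarith)]; linarith
    linarith
  have hK : 0 ≤ ((p - 1) * δ) ^ p / (p * (p - 1)) :=
    div_nonneg (rpow_nonneg ha.le p) (by nlinarith)
  have hKs : p * (((p - 1) * δ) ^ p / (p * (p - 1))) ≤ p * δ * s ^ (p - 1) := calc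
    _ = δ * ((p - 1) * δ) ^ (p - 1) := by
      rw [rpow_eq_mul_rpow_sub_one (p := p) ha]
      field_simp
    _ ≤ δ * s ^ (p - 1) := by gcongr; linarith
    _ ≤ p * δ * s ^ (p - 1) := by nlinarith [rpow_pos_of_pos hs0 (p - 1)]
  have hbC : p * δ ≤ -(log ((p - 1) * δ) + 1 + 1 / p) * s := by nlinarith
  refine ⟨sub_half_le_elasticity_outerBranch hs0 (by linarith) (by linarith) hK hKs hbC,
    le_trans ?_ (sub_le_elasticity_outerBranch hs0 (by linarith) (by linarith) hK hKs),
    elasticity_outerBranch_le hs0 (by linarith) (by linarith) hK hKs⟩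
  gcongr
  nlinarith

lemma elasticity_eq_f₁Tail {F : ℝ → ℝ} (hp : 1 < p) (hδ : 0 < δ)
    (hin : ∀ s, 0 < s → s < (p - 1) * δ → F s = innerBranch p s)
    (hout : ∀ s, (p - 1) * δ ≤ s → F s = f₁Tail p δ s) (hs : (p - 1) * δ ≤ s) :
    elasticity F s = elasticity (f₁Tail p δ) s := by
  have ha : 0 < (p - 1) * δ := by nlinarith
  obtain rfl | hs := hs.eq_or_lt
  · have hF : HasDerivAt F (-(p * log ((p - 1) * δ) + 1) * ((p - 1) * δ) ^ (p - 1))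
        ((p - 1) * δ) := by
      refine (hasDerivAt_innerBranch ha).of_eventuallyEq_nhdsLE_nhdsGE
        (hasDerivAt_f₁Tail_threshold hp hδ) ?_ (eventually_nhdsWithin_of_forall hout)
      filter_upwards [Ioc_mem_nhdsLE ha] with t ht
      obtain hlt | rfl := ht.2.lt_or_eq
      · exact hin t ht.1 hlt
      · exact (hout _ le_rfl).trans (f₁Tail_threshold_eq_innerBranch hp hδ)
    exact elasticity_congr_of_hasDerivAt hF (hasDerivAt_f₁Tail_threshold hp hδ) (hout _ le_rfl)
  · have hFs : F =ᶠ[𝓝 s] f₁Tail p δ :=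
      eventually_of_mem (Ioi_mem_nhds hs) fun t ht ↦ hout t (le_of_lt ht)
    exact hFs.elasticity_eq

lemma elasticity_bounds_of_pos {F : ℝ → ℝ} (hp : 2 ≤ p) (hδ : 0 < δ)
    (hlog : log ((p - 1) * δ) ≤ -4)
    (hin : ∀ s, 0 < s → s < (p - 1) * δ → F s = innerBranch p s)
    (hout : ∀ s, (p - 1) * δ ≤ s → F s = f₁Tail p δ s) (hs : 0 < s) :
    p - 1 / 2 ≤ elasticity F s ∧ elasticity F s ≤ p := by
  rcases lt_or_ge s ((p - 1) * δ) with hsa | hsa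
  · have hFs : F =ᶠ[𝓝 s] innerBranch p :=
      eventually_of_mem (Ioo_mem_nhds hs hsa) fun t ht ↦ hin t ht.1 ht.2
    have hlogs : log s < -4 := (log_lt_log hs hsa).trans_le hlog
    have hneg : log s < 0 := by linarith
    rw [hFs.elasticity_eq, elasticity_innerBranch hs hneg.ne]
    have : -(1 / 2) ≤ (log s)⁻¹ := by
      rw [le_inv_of_neg (by norm_num) hneg]; linarith
    constructor <;> linarith [inv_lt_zero.2 hneg]
  · rw [elasticity_eq_f₁Tail (by linarith) hδ hin hout hsa]
    obtain ⟨hlow, -, hupp⟩ := elasticity_f₁Tail_bounds hp hδ hlog hsa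
    exact ⟨hlow, hupp⟩

lemma tendsto_elasticity_atTop {F : ℝ → ℝ} (hp : 2 ≤ p) (hδ : 0 < δ)
    (hlog : log ((p - 1) * δ) ≤ -4)
    (hin : ∀ s, 0 < s → s < (p - 1) * δ → F s = innerBranch p s)
    (hout : ∀ s, (p - 1) * δ ≤ s → F s = f₁Tail p δ s) :
    Tendsto (elasticity F) atTop (𝓝 p) := by
  have hdecay : Tendsto (fun s : ℝ ↦ p * δ / s) atTop (𝓝 0) :=
    tendsto_const_nhds.div_atTop tendsto_id
  have hlow : Tendsto (fun s ↦ p - p * δ / s) atTop (𝓝 p) := by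
    simpa using tendsto_const_nhds.sub hdecay
  refine tendsto_of_tendsto_of_tendsto_of_le_of_le' hlow tendsto_const_nhds ?_ ?_ <;>
    filter_upwards [eventually_ge_atTop ((p - 1) * δ)] with s hs <;>
    rw [elasticity_eq_f₁Tail (by linarith) hδ hin hout hs]
  exacts [(elasticity_f₁Tail_bounds hp hδ hlog hs).2.1,
    (elasticity_f₁Tail_bounds hp hδ hlog hs).2.2]

end F₁

theorem stmt_4_general (p : ℝ) (hp : 2 ≤ p) :
    ∃ δ₀ : ℝ, 0 < δ₀ ∧ ∀ δ : ℝ, 0 < δ → δ < δ₀ →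
      ∀ F₁ : ℝ → ℝ,
        (∀ s ≤ (0 : ℝ), F₁ s = F₁ (-s)) → F₁ 0 = 0 →
        (∀ s : ℝ, 0 < s → s < (p - 1) * δ →
          F₁ s = -(1 / p) * s ^ p * Real.log (s ^ p)) →
        (∀ s : ℝ, (p - 1) * δ ≤ s →
          F₁ s = -(1 / p) * s ^ p * (Real.log (((p - 1) * δ) ^ p) + p + 1)
            + p * δ * s ^ (p - 1) - (1 / (p * (p - 1))) * ((p - 1) * δ) ^ p) →
        ∃ l : ℝ, 1 < l ∧ l < 2 ∧
          (∀ s : ℝ, s ≠ 0 →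
            l ≤ deriv F₁ s * s / F₁ s ∧ deriv F₁ s * s / F₁ s ≤ p) ∧
          (∀ s : ℝ, 0 < s → p - 1 < deriv F₁ s * s / F₁ s) ∧
          Filter.Tendsto (fun s => deriv F₁ s * s / F₁ s) Filter.atTop (nhds p) := by
  have hp1 : 0 < p - 1 := by linarith
  refine ⟨exp (-4) / (p - 1), by positivity, fun δ hδ hδ₀ F₁ hEven _ hin hout ↦ ?_⟩
  have hlog : log ((p - 1) * δ) ≤ -4 := by
    rw [← log_exp (-4)]
    exact log_le_log (by positivity) (by rw [lt_div_iff₀' hp1] at hδ₀; exact hδ₀.le)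
  have hin' (s : ℝ) (hs : 0 < s) (hsa : s < (p - 1) * δ) : F₁ s = innerBranch p s :=
    (hin s hs hsa).trans (innerBranch_eq (by linarith) hs).symm
  have hout' (s : ℝ) (hs : (p - 1) * δ ≤ s) : F₁ s = f₁Tail p δ s :=
    (hout s hs).trans (f₁Tail_eq (by linarith) hδ).symm
  have hbounds (s : ℝ) (hs : 0 < s) := elasticity_bounds_of_pos hp hδ hlog hin' hout' hs
  refine ⟨3 / 2, by norm_num, by norm_num, fun s hs ↦ ?_,
    fun s hs ↦ (by linarith : p - 1 < p - 1 / 2).trans_le (hbounds s hs).1,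
    tendsto_elasticity_atTop hp hδ hlog hin' hout'⟩
  change 3 / 2 ≤ elasticity F₁ s ∧ elasticity F₁ s ≤ p
  obtain hs | hs := hs.lt_or_gt
  · rw [elasticity_of_even hEven hs]
    have := hbounds (-s) (neg_pos.2 hs)
    constructor <;> linarith
  · have := hbounds s hs
    constructor <;> linarith

theorem stmt_4 (N : ℕ) (p : ℝ) (hp : 2 ≤ p) (hpN : p < N) :
    ∃ δ₀ : ℝ, 0 < δ₀ ∧ ∀ δ : ℝ, 0 < δ → δ < δ₀ →
      ∀ F₁ : ℝ → ℝ,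
        (∀ s ≤ (0 : ℝ), F₁ s = F₁ (-s)) → F₁ 0 = 0 →
        (∀ s : ℝ, 0 < s → s < (p - 1) * δ →
          F₁ s = -(1 / p) * s ^ p * Real.log (s ^ p)) →
        (∀ s : ℝ, (p - 1) * δ ≤ s →
          F₁ s = -(1 / p) * s ^ p * (Real.log (((p - 1) * δ) ^ p) + p + 1)
            + p * δ * s ^ (p - 1) - (1 / (p * (p - 1))) * ((p - 1) * δ) ^ p) →
        ∃ l : ℝ, 1 < l ∧ l < 2 ∧
          (∀ s : ℝ, s ≠ 0 →
            l ≤ deriv F₁ s * s / F₁ s ∧ deriv F₁ s * s / F₁ s ≤ p) ∧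
          (∀ s : ℝ, 0 < s → p - 1 < deriv F₁ s * s / F₁ s) ∧
          Filter.Tendsto (fun s => deriv F₁ s * s / F₁ s) Filter.atTop (nhds p) :=
  stmt_4_general p hp
end

section
/- Strict subadditivity under mass scaling: let I : S → ℝ be a functional on functions with ∫|u|^p = c for which I(ξu) = ξ^p I(u) - (1/p) ξ^p log(ξ^p) ∫|u|^p dx for all ξ > 0. Define 𝓘(a) = inf{I(u) : ∫|u|^p = a^p}. If 0 < a₁ < a₂ and 𝓘(a₁) is finite, then (a₁^p/a₂^p) 𝓘(a₂) < 𝓘(a₁). -/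
/-!
Multiplying by `ξ > 0` maps the functions of mass `m` bijectively onto those of mass `ξ ^ p * m`,
and by the scaling law it acts on the values of `I` through the increasing affine map
`t ↦ ξ ^ p * t - (1 / p) * ξ ^ p * log (ξ ^ p) * m`. Taking infima,
`𝓘(a₂) = ξ ^ p 𝓘(a₁) - (1 / p) a₁ ^ p ξ ^ p log (ξ ^ p)` for `ξ = a₂ / a₁`, and the subtracted
term is positive because `ξ > 1`.
-/

open MeasureTheory Real

section MassLevelSet

variable {α : Type*} [MeasurableSpace α] (μ : Measure α) (p : ℝ)

def massLevelSet (m : ℝ) : Set (α → ℝ) := {u | ∫ x, |u x| ^ p ∂μ = m}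

variable {μ p} in
lemma mem_massLevelSet {m : ℝ} {u : α → ℝ} :
    u ∈ massLevelSet μ p m ↔ ∫ x, |u x| ^ p ∂μ = m :=
  Iff.rfl

lemma integral_abs_const_mul_rpow {σ : ℝ} (hσ : 0 ≤ σ) (u : α → ℝ) :
    ∫ x, |σ * u x| ^ p ∂μ = σ ^ p * ∫ x, |u x| ^ p ∂μ := by
  simp_rw [abs_mul, abs_of_nonneg hσ, mul_rpow hσ (abs_nonneg _)]
  exact integral_const_mul _ _

lemma image_const_mul_massLevelSet {σ : ℝ} (hσ : 0 < σ) (m : ℝ) :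
    (fun u x => σ * u x) '' massLevelSet μ p m = massLevelSet μ p (σ ^ p * m) := by
  have hσp : σ ^ p ≠ 0 := (rpow_pos_of_pos hσ p).ne'
  ext v
  constructor
  · rintro ⟨u, hu, rfl⟩
    rw [mem_massLevelSet] at hu ⊢
    rw [integral_abs_const_mul_rpow μ p hσ.le, hu]
  · intro hv
    refine ⟨fun x => σ⁻¹ * v x, ?_, ?_⟩
    · rw [mem_massLevelSet] at hv ⊢
      rw [integral_abs_const_mul_rpow μ p (inv_nonneg.mpr hσ.le), hv, inv_rpow hσ.le,
        inv_mul_cancel_left₀ hσp]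
    · funext x
      simp only [mul_inv_cancel_left₀ hσ.ne']

lemma image_massLevelSet_of_scaling {I : (α → ℝ) → ℝ} {ξ : ℝ} (hξ : 0 < ξ)
    (hI : ∀ u, I (fun x => ξ * u x) =
      ξ ^ p * I u - (1 / p) * ξ ^ p * log (ξ ^ p) * ∫ x, |u x| ^ p ∂μ) (m : ℝ) :
    I '' massLevelSet μ p (ξ ^ p * m) =
      (fun t => ξ ^ p * t - (1 / p) * ξ ^ p * log (ξ ^ p) * m) '' (I '' massLevelSet μ p m) := by
  rw [← image_const_mul_massLevelSet μ p hξ, Set.image_image, Set.image_image]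
  refine Set.image_congr fun u hu => ?_
  rw [hI, hu]

end MassLevelSet

lemma sInf_image_mul_sub {A : Set ℝ} (hne : A.Nonempty) (hbdd : BddBelow A)
    {k : ℝ} (hk : 0 ≤ k) (c : ℝ) :
    sInf ((fun t => k * t - c) '' A) = k * sInf A - c :=
  (Monotone.map_csInf_of_continuousAt (by fun_prop)
    (fun _ _ h => sub_le_sub_right (mul_le_mul_of_nonneg_left h hk) c) hne hbdd).symm

theorem stmt_11 (N : ℕ) (p : ℝ) (hp : 0 < p)
    (I : (EuclideanSpace ℝ (Fin N) → ℝ) → ℝ)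
    (hscale : ∀ (u : EuclideanSpace ℝ (Fin N) → ℝ) (ξ : ℝ), 0 < ξ →
      I (fun x => ξ * u x) = ξ ^ p * I u
        - (1 / p) * ξ ^ p * Real.log (ξ ^ p) * ∫ x, |u x| ^ p)
    (a₁ a₂ : ℝ) (ha₁ : 0 < a₁) (ha : a₁ < a₂)
    (hne : ∃ u : EuclideanSpace ℝ (Fin N) → ℝ, (∫ x, |u x| ^ p) = a₁ ^ p)
    (hbdd : BddBelow (I '' {u | (∫ x, |u x| ^ p) = a₁ ^ p})) :
    a₁ ^ p / a₂ ^ p * sInf (I '' {u | (∫ x, |u x| ^ p) = a₂ ^ p})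
      < sInf (I '' {u | (∫ x, |u x| ^ p) = a₁ ^ p}) := by
  set ξ := a₂ / a₁
  have hξ : 0 < ξ := div_pos (ha₁.trans ha) ha₁
  have hξp : 0 < ξ ^ p := rpow_pos_of_pos hξ p
  have ha₁p : 0 < a₁ ^ p := rpow_pos_of_pos ha₁ p
  have ha₂p : a₂ ^ p = ξ ^ p * a₁ ^ p := by
    rw [← mul_rpow hξ.le ha₁.le, div_mul_cancel₀ a₂ ha₁.ne']
  have hlog : 0 < log (ξ ^ p) := by
    rw [log_rpow hξ]
    exact mul_pos hp (log_pos ((one_lt_div ha₁).mpr ha))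
  obtain ⟨u₀, hu₀⟩ := hne
  have hinf : sInf (I '' massLevelSet volume p (a₂ ^ p)) =
      ξ ^ p * sInf (I '' massLevelSet volume p (a₁ ^ p))
        - (1 / p) * ξ ^ p * log (ξ ^ p) * a₁ ^ p := by
    rw [ha₂p, image_massLevelSet_of_scaling volume p hξ (fun u => hscale u ξ hξ)]
    exact sInf_image_mul_sub (Set.Nonempty.image I ⟨u₀, hu₀⟩) hbdd hξp.le _
  change a₁ ^ p / a₂ ^ p * sInf (I '' massLevelSet volume p (a₂ ^ p))
    < sInf (I '' massLevelSet volume p (a₁ ^ p))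
  rw [hinf, ha₂p, div_mul_eq_div_div_swap, div_self ha₁p.ne', one_div_mul_eq_div,
    div_lt_iff₀ hξp]
  linarith [mul_pos (mul_pos (mul_pos (one_div_pos.mpr hp) hξp) hlog) ha₁p]
end
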